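/- In the embedding-then-LayerNorm setting Y = LayerNorm(XW_E; γ) with X ∈ ℝ^{n×d} one-hot rows, W_E ∈ ℝ^{d×D}, and all rows of Z = XW_E having positive variance, the Jacobian norm satisfies ‖∂Y/∂W_E‖_F ≤ n√D · ‖γ‖_F / min_{k∈[d]} ‖w̃_k‖₂, where w̃_k denotes the k-th row of the row-wise centered matrix W̃_E = W_E - E_r[W_E]. -/

import Mathlib

/-!
With one-hot `X`, row `i` of `X W_E` is the row `w_{k(i)}` of `W_E`, so the Jacobian only sees the
row LayerNorm `f(z) = γ ⊙ z̃ / σ(z)` at the rows of `W_E`, and a perturbation of row `k` moves only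
the output rows `i` with `k(i) = k`. The partial derivatives of `f` at `w` are
`∂ₗ fⱼ = (γⱼ / σ) (P eⱼ - (w̃ⱼ / ‖w̃‖²) w̃)ₗ` with `P` the centering projection; the bracket is the
projection of `eⱼ` onto `{𝟙, w̃}ᗮ`, so row `j` of the Jacobian has squared norm at most
`γⱼ² / σ² = γⱼ² D / ‖w̃‖²`. Summing over the `n` rows and `D` outputs gives
`n D ‖γ‖² / minₖ ‖w̃ₖ‖² ≤ (n √D ‖γ‖ / minₖ ‖w̃ₖ‖)²`.
-/

attribute [local instance] Matrix.normedAddCommGroup Matrix.normedSpace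

noncomputable def rmean {n D : ℕ} (X : Matrix (Fin n) (Fin D) ℝ) (i : Fin n) : ℝ :=
  (∑ j, X i j) / D

noncomputable def rvar {n D : ℕ} (X : Matrix (Fin n) (Fin D) ℝ) (i : Fin n) : ℝ :=
  (∑ j, (X i j - rmean X i)^2) / D

/-- LayerNorm without bias. -/
noncomputable def layerNorm {n D : ℕ} (X : Matrix (Fin n) (Fin D) ℝ)
    (γ : Fin D → ℝ) : Matrix (Fin n) (Fin D) ℝ :=
  Matrix.of fun i j => (X i j - rmean X i) / Real.sqrt (rvar X i) * γ j

/-- Row-wise centering. -/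
noncomputable def rowCenter {m D : ℕ} (A : Matrix (Fin m) (Fin D) ℝ) :
    Matrix (Fin m) (Fin D) ℝ :=
  Matrix.of fun i j => A i j - (∑ k, A i k) / D

open Finset

section RowLayerNorm

variable {D : ℕ}

noncomputable def vecCenter (z : Fin D → ℝ) : Fin D → ℝ := fun j => z j - (∑ t, z t) / D

noncomputable def layerNormRow (γ z : Fin D → ℝ) : Fin D → ℝ :=
  fun j => vecCenter z j / √((∑ t, vecCenter z t ^ 2) / D) * γ j

theorem layerNorm_apply_eq_layerNormRow {n : ℕ} (Z : Matrix (Fin n) (Fin D) ℝ) (γ : Fin D → ℝ)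
    (i : Fin n) : layerNorm Z γ i = layerNormRow γ (Z i) := rfl

theorem sum_vecCenter (z : Fin D → ℝ) : ∑ j, vecCenter z j = 0 := by
  rcases Nat.eq_zero_or_pos D with rfl | hD
  · simp
  · simp [vecCenter, sum_sub_distrib, mul_div_cancel₀ _ (Nat.cast_pos.2 hD : (0 : ℝ) < D).ne']

theorem vecCenter_single (l j : Fin D) :
    vecCenter (Pi.single l 1) j = (if j = l then 1 else 0) - 1 / D := by
  simp [vecCenter, Pi.single_apply]

theorem sum_mul_vecCenter {x : Fin D → ℝ} (hx : ∑ i, x i = 0) (y : Fin D → ℝ) :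
    ∑ i, x i * vecCenter y i = ∑ i, x i * y i := by
  simp [vecCenter, mul_sub, sum_sub_distrib, ← sum_mul, hx]

-- `vecCenter eⱼ - (cⱼ / ‖c‖²) c` is the projection of `eⱼ` onto `{𝟙, c}ᗮ`, of squared norm
-- `1 - 1/D - cⱼ² / ‖c‖²`.
theorem sum_sq_vecCenter_single_sub_le_one {c : Fin D → ℝ} (hc : ∑ t, c t = 0)
    (hS : 0 < ∑ t, c t ^ 2) (j : Fin D) :
    ∑ l, (vecCenter (Pi.single j 1) l - c j * c l / ∑ t, c t ^ 2) ^ 2 ≤ 1 := by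
  set S := ∑ t, c t ^ 2
  set b := vecCenter (Pi.single j (1 : ℝ))
  have hbb : ∑ l, b l ^ 2 = 1 - 1 / D := by
    calc ∑ l, b l ^ 2 = ∑ l, b l * b l := by simp only [sq]
      _ = b j := by simp [b, sum_mul_vecCenter (sum_vecCenter _), Pi.single_apply]
      _ = 1 - 1 / D := by simp [b, vecCenter_single]
  have hbc : ∑ l, c l * b l = c j := by
    simp [b, sum_mul_vecCenter hc, Pi.single_apply]
  have hexp : ∑ l, (b l - c j * c l / S) ^ 2
      = ∑ l, b l ^ 2 - 2 * c j / S * ∑ l, c l * b l + (c j / S) ^ 2 * S := by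
    rw [sum_congr rfl fun l _ => (by ring : (b l - c j * c l / S) ^ 2
      = b l ^ 2 - 2 * c j / S * (c l * b l) + (c j / S) ^ 2 * c l ^ 2)]
    simp only [sum_add_distrib, sum_sub_distrib, ← mul_sum, S]
  rw [hexp, hbb, hbc, show 2 * c j / S * c j = 2 * (c j ^ 2 / S) by ring,
    show (c j / S) ^ 2 * S = c j ^ 2 / S by field_simp]
  have : 0 ≤ 1 / (D : ℝ) := by positivity
  have : 0 ≤ c j ^ 2 / S := by positivity
  linarith

noncomputable def vecCenterCLM : (Fin D → ℝ) →L[ℝ] (Fin D → ℝ) :=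
  LinearMap.toContinuousLinearMap
    { toFun := vecCenter
      map_add' := fun x y => by ext j; simp only [vecCenter, Pi.add_apply, sum_add_distrib]; ring
      map_smul' := fun c x => by ext j; simp only [vecCenter, Pi.smul_apply, smul_eq_mul, ← mul_sum, RingHom.id_apply]; ring }

theorem vecCenterCLM_apply (z : Fin D → ℝ) : vecCenterCLM z = vecCenter z := rfl

theorem hasFDerivAt_layerNormRow_apply (γ : Fin D → ℝ) {w : Fin D → ℝ}
    (hw : 0 < ∑ t, vecCenter w t ^ 2) (j : Fin D) :
    ∃ L : (Fin D → ℝ) →L[ℝ] ℝ, HasFDerivAt (fun z => layerNormRow γ z j) L w ∧ ∀ l,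
      L (Pi.single l 1) = γ j / √((∑ t, vecCenter w t ^ 2) / D) *
        (vecCenter (Pi.single j 1) l - vecCenter w j * vecCenter w l / ∑ t, vecCenter w t ^ 2) := by
  set S := ∑ t, vecCenter w t ^ 2
  have hD : (0 : ℝ) < D := by
    rcases Nat.eq_zero_or_pos D with rfl | hD
    · simp [S] at hw
    · exact_mod_cast hD
  have hσ : 0 < √(S / D) := by positivity
  have hc : ∀ t, HasFDerivAt (fun z => vecCenter z t)
      ((ContinuousLinearMap.proj t).comp vecCenterCLM) w :=
    hasFDerivAt_pi'.1 vecCenterCLM.hasFDerivAt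
  have hS := HasFDerivAt.fun_sum fun t (_ : t ∈ univ) => (hc t).pow 2
  have hψ : HasDerivAt (fun s => (√(s / D))⁻¹) (-(2 * S * √(S / D))⁻¹) S := by
    refine ((((hasDerivAt_id S).div_const D).sqrt (by positivity)).inv hσ.ne').congr_deriv ?_
    rw [id, Real.sq_sqrt (by positivity)]
    field_simp
  have h := ((hc j).mul (hψ.comp_hasFDerivAt w hS)).mul_const (γ j)
  refine ⟨_, h.congr_of_eventuallyEq (Filter.Eventually.of_forall fun z => ?_), fun l => ?_⟩
  · simp [layerNormRow, div_eq_mul_inv]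
  · simp only [Nat.add_one_sub_one, pow_one, nsmul_eq_mul, Nat.cast_ofNat, smul_add, smul_neg,
      neg_smul, add_apply, neg_apply, smul_apply, Function.comp_apply, _root_.sum_apply,
      ContinuousLinearMap.comp_apply, ContinuousLinearMap.proj_apply, vecCenterCLM_apply,
      smul_eq_mul]
    simp_rw [mul_assoc (2 : ℝ), ← mul_sum, sum_mul_vecCenter (sum_vecCenter w)]
    simp only [vecCenter_single, Pi.single_apply, mul_ite, mul_one, mul_zero, sum_ite_eq',
      mem_univ, ↓reduceIte]
    rw [show ∑ x, vecCenter w x ^ 2 = S from rfl]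
    field_simp
    simp only [@eq_comm _ l j]
    ring

theorem differentiableAt_layerNormRow (γ : Fin D → ℝ) {w : Fin D → ℝ}
    (hw : 0 < ∑ t, vecCenter w t ^ 2) : DifferentiableAt ℝ (layerNormRow γ) w :=
  differentiableAt_pi.2 fun j =>
    (hasFDerivAt_layerNormRow_apply γ hw j).choose_spec.1.differentiableAt

theorem sum_sq_fderiv_layerNormRow_le (γ : Fin D → ℝ) {w : Fin D → ℝ}
    (hw : 0 < ∑ t, vecCenter w t ^ 2) (j : Fin D) :
    ∑ l, (fderiv ℝ (layerNormRow γ) w (Pi.single l 1) j) ^ 2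
      ≤ γ j ^ 2 * D / ∑ t, vecCenter w t ^ 2 := by
  obtain ⟨L, hL, hLval⟩ := hasFDerivAt_layerNormRow_apply γ hw j
  have hpartial : ∀ l, fderiv ℝ (layerNormRow γ) w (Pi.single l 1) j = L (Pi.single l 1) := by
    intro l
    rw [← hL.fderiv, fderiv_apply (differentiableAt_layerNormRow γ hw) j]
    rfl
  simp only [hpartial, hLval, mul_pow, ← mul_sum]
  calc _ ≤ (γ j / √((∑ t, vecCenter w t ^ 2) / D)) ^ 2 * 1 :=
        mul_le_mul_of_nonneg_left (sum_sq_vecCenter_single_sub_le_one (sum_vecCenter w) hw j)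
          (sq_nonneg _)
    _ = γ j ^ 2 * D / ∑ t, vecCenter w t ^ 2 := by
        rw [div_pow, Real.sq_sqrt (by positivity)]
        field_simp

end RowLayerNorm

theorem sum_sq_fderiv_comp_rows {n d D D' : ℕ} (f : (Fin D → ℝ) → (Fin D' → ℝ))
    (r : Fin n → Fin d) (W : Fin d → Fin D → ℝ) (hf : ∀ i, DifferentiableAt ℝ f (W (r i)))
    (i : Fin n) (j : Fin D') :
    ∑ k, ∑ l, (fderiv ℝ (fun V : Fin d → Fin D → ℝ => fun i => f (V (r i))) W
      (Matrix.single k l 1) i j) ^ 2 = ∑ l, (fderiv ℝ f (W (r i)) (Pi.single l 1) j) ^ 2 := by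
  have h : HasFDerivAt (fun V : Fin d → Fin D → ℝ => fun i => f (V (r i)))
      (ContinuousLinearMap.pi fun i => (fderiv ℝ f (W (r i))).comp
        (ContinuousLinearMap.proj (R := ℝ) (φ := fun _ : Fin d => Fin D → ℝ) (r i))) W :=
    hasFDerivAt_pi.2 fun i => (hf i).hasFDerivAt.comp W (hasFDerivAt_apply (r i) W)
  have hrow : ∀ k l, fderiv ℝ (fun V : Fin d → Fin D → ℝ => fun i => f (V (r i))) W
      (Matrix.single k l 1) i j
        = if r i = k then fderiv ℝ f (W (r i)) (Pi.single l 1) j else 0 := by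
    intro k l
    rw [h.fderiv]
    change fderiv ℝ f (W (r i)) (Matrix.single k l (1 : ℝ) (r i)) j = _
    have hsingle : Matrix.single k l (1 : ℝ) (r i) = if r i = k then Pi.single l 1 else 0 := by
      ext t
      split_ifs with hk
      · simp [hk, Matrix.single_apply, Pi.single_apply, eq_comm]
      · simp [Matrix.single_apply_of_row_ne (Ne.symm hk)]
    rw [hsingle]
    split_ifs <;> simp
  simp [hrow]

theorem stmt_19_general {n d D : ℕ} (hd : (Finset.univ : Finset (Fin d)).Nonempty)
    (X : Matrix (Fin n) (Fin d) ℝ) (W : Matrix (Fin d) (Fin D) ℝ)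
    (γ : Fin D → ℝ)
    (honehot : ∀ i, ∃ k, X i = Pi.single k 1)
    (hW : ∀ k, 0 < ∑ j, (rowCenter W k j)^2) :
    Real.sqrt (∑ i : Fin n, ∑ j : Fin D, ∑ k : Fin d, ∑ l : Fin D,
        (fderiv ℝ (fun V : Matrix (Fin d) (Fin D) ℝ => layerNorm (X * V) γ) W
          (Matrix.single k l 1) i j)^2)
      ≤ n * Real.sqrt D * Real.sqrt (∑ j, (γ j)^2) /
        Finset.univ.inf' hd (fun k => Real.sqrt (∑ j, (rowCenter W k j)^2)) := by
  choose r hr using honehot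
  set M := Finset.univ.inf' hd (fun k => Real.sqrt (∑ j, (rowCenter W k j)^2))
  have hM : 0 < M := (lt_inf'_iff hd).2 fun k _ => Real.sqrt_pos.2 (hW k)
  have hMle : ∀ k, M ^ 2 ≤ ∑ t, vecCenter (W k) t ^ 2 := fun k =>
    Real.le_sqrt' hM |>.1 (inf'_le _ (mem_univ k))
  have hF : (fun V : Matrix (Fin d) (Fin D) ℝ => layerNorm (X * V) γ)
      = fun V i => layerNormRow γ (V (r i)) := by
    ext V i : 2
    rw [layerNorm_apply_eq_layerNormRow, Matrix.mul_apply_eq_vecMul, hr, Matrix.single_one_vecMul]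
    rfl
  have hrows : ∀ i j,
      ∑ k, ∑ l, (fderiv ℝ (fun V : Matrix (Fin d) (Fin D) ℝ => layerNorm (X * V) γ) W
        (Matrix.single k l 1) i j) ^ 2
        = ∑ l, (fderiv ℝ (layerNormRow γ) (W (r i)) (Pi.single l 1) j) ^ 2 := by
    intro i j
    rw [hF]
    exact sum_sq_fderiv_comp_rows _ r W (fun i => differentiableAt_layerNormRow γ (hW (r i))) i j
  have hbound : ∀ i j,
      ∑ l, (fderiv ℝ (layerNormRow γ) (W (r i)) (Pi.single l 1) j) ^ 2 ≤ γ j ^ 2 * D / M ^ 2 :=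
    fun i j => (sum_sq_fderiv_layerNormRow_le γ (hW (r i)) j).trans
      (div_le_div_of_nonneg_left (by positivity) (pow_pos hM 2) (hMle (r i)))
  rw [Real.sqrt_le_left (by positivity)]
  calc ∑ i, ∑ j, ∑ k, ∑ l, _ ≤ ∑ _i : Fin n, ∑ j, γ j ^ 2 * D / M ^ 2 := by
        simp only [hrows]
        exact sum_le_sum fun i _ => sum_le_sum fun j _ => hbound i j
    _ = n * D * (∑ j, γ j ^ 2) / M ^ 2 := by
        rw [sum_const, card_univ, Fintype.card_fin, nsmul_eq_mul, ← sum_div, ← sum_mul]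
        ring
    _ ≤ (n * √D * √(∑ j, γ j ^ 2) / M) ^ 2 := by
        rw [div_pow, mul_pow, mul_pow, Real.sq_sqrt (Nat.cast_nonneg D),
          Real.sq_sqrt (by positivity)]
        gcongr
        exact_mod_cast Nat.le_self_pow two_ne_zero n

/-- for `Y = LayerNorm(X W_E; γ)` with `X` one-hot, the
Frobenius norm of the Jacobian `∂Y/∂W_E` is at most
`n√D·‖γ‖_F / minₖ ‖w̃ₖ‖₂`. -/
theorem stmt_19 {n d D : ℕ} (hd : (Finset.univ : Finset (Fin d)).Nonempty)
    (X : Matrix (Fin n) (Fin d) ℝ) (W : Matrix (Fin d) (Fin D) ℝ)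
    (γ : Fin D → ℝ)
    (honehot : ∀ i, ∃ k, X i = Pi.single k 1)
    (hW : ∀ k, 0 < ∑ j, (rowCenter W k j)^2)
    (hvar : ∀ i, 0 < rvar (X * W) i) :
    Real.sqrt (∑ i : Fin n, ∑ j : Fin D, ∑ k : Fin d, ∑ l : Fin D,
        (fderiv ℝ (fun V : Matrix (Fin d) (Fin D) ℝ => layerNorm (X * V) γ) W
          (Matrix.single k l 1) i j)^2)
      ≤ n * Real.sqrt D * Real.sqrt (∑ j, (γ j)^2) /
        Finset.univ.inf' hd (fun k => Real.sqrt (∑ j, (rowCenter W k j)^2)) :=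
  stmt_19_general hd X W γ honehot hW
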